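/- (Forward recursion for the weights.) In the dual quantization scheme, for every k = 1,…,n and every grid point x_l^k of Γ_k ∪ {x_0^k, x_{N_k+1}^k}: P(X̂^k = x_l^k) = Σ_{j=0}^{N_{k−1}+1} [ (1 − p_k) · λ_l^k(x_j^{k−1}) + p_k · λ_l^k(x_j^{k−1} + α_k) ] · P(X̂^{k−1} = x_j^{k−1}), where λ_l^k(ξ) := P(J_{Γ_k}(ξ, Λ_k) = x_l^k) for ξ ∈ [0, s_k]. -/

import Mathlib

open MeasureTheory ProbabilityTheory

/-- Index `j*(ξ)` of the segment `[x_j, x_{j+1})` of the grid containing `ξ`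
(with default value `N`, corresponding to the closed last segment). -/
noncomputable def jstar (N : ℕ) (x : ℕ → ℝ) (ξ : ℝ) : ℕ :=
  if h : ∃ j, j ≤ N ∧ x j ≤ ξ ∧ ξ < x (j + 1) then h.choose else N

/-- The dual quantization operator `J_Γ(ξ, λ)` associated with the grid
`x 0 ≤ x 1 ≤ … ≤ x (N+1)`. -/
noncomputable def dualQ (N : ℕ) (x : ℕ → ℝ) (ξ lam : ℝ) : ℝ :=
  if x (jstar N x ξ + 1) = x (jstar N x ξ) then ξ
  else if lam < (x (jstar N x ξ + 1) - ξ) / (x (jstar N x ξ + 1) - x (jstar N x ξ)) then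
    x (jstar N x ξ)
  else x (jstar N x ξ + 1)

/-- The dual quantization scheme `X̂⁰ := 0`, `X̂ᵏ⁺¹ := J_{Γₖ}(X̂ᵏ + αₖ Zₖ, Λₖ)`,
where the grid `Γₖ` (used in the step producing `X̂ᵏ⁺¹`) has `Nk k` interior points
given by `x k 1, …, x k (Nk k)`. -/
noncomputable def XhatScheme {Ω : Type*} (Nk : ℕ → ℕ) (x : ℕ → ℕ → ℝ) (α : ℕ → ℝ)
    (Z Λ : ℕ → Ω → ℝ) : ℕ → Ω → ℝ
  | 0 => fun _ => 0
  | k + 1 => fun ω =>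
      dualQ (Nk k) (x k) (XhatScheme Nk x α Z Λ k ω + α k * Z k ω) (Λ k ω)

/-!
The step `X̂ᵏ⁺¹ = J_{Γₖ}(X̂ᵏ + αₖ Zₖ, Λₖ)` consumes only the fresh inputs `(Zₖ, Λₖ)`, while `X̂ᵏ`
is measurable with respect to `σ(Zᵢ, Λᵢ : i < k)`; hence `X̂ᵏ` and `(Zₖ, Λₖ)` are independent.
Splitting the event `{X̂ᵏ⁺¹ = x}` along the finitely many grid values `c` of `X̂ᵏ`, each piece
factors as `P(X̂ᵏ = c) · P(J(c + αₖ Zₖ, Λₖ) = x)`, and conditioning the second factor on the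
Bernoulli variable `Zₖ`, independent of `Λₖ`, gives `(1 - pₖ) λ(c) + pₖ λ(c + αₖ)`.
-/

open Set

section Grid

variable {N : ℕ} {x : ℕ → ℝ} {ξ : ℝ}

lemma jstar_le (N : ℕ) (x : ℕ → ℝ) (ξ : ℝ) : jstar N x ξ ≤ N := by
  unfold jstar
  split
  · next h => exact h.choose_spec.1
  · exact le_rfl

lemma jstar_mem_segment (h : ∃ j, j ≤ N ∧ x j ≤ ξ ∧ ξ < x (j + 1)) :
    x (jstar N x ξ) ≤ ξ ∧ ξ < x (jstar N x ξ + 1) := by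
  rw [jstar, dif_pos h]
  exact h.choose_spec.2

lemma eq_of_mem_segment_of_mem_segment (hx : MonotoneOn x (Iic (N + 1))) {i j : ℕ}
    (hi : i ≤ N) (hj : j ≤ N) (hξi : x i ≤ ξ ∧ ξ < x (i + 1)) (hξj : x j ≤ ξ ∧ ξ < x (j + 1)) :
    i = j := by
  by_contra hne
  wlog hij : i < j generalizing i j
  · exact this hj hi hξj hξi (Ne.symm hne) (by omega)
  have : x (i + 1) ≤ x j := hx (mem_Iic.2 (by omega)) (mem_Iic.2 (by omega)) hij
  linarith [hξi.2, hξj.1]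

lemma jstar_preimage_singleton (hx : MonotoneOn x (Iic (N + 1))) (j : ℕ) :
    jstar N x ⁻¹' {j} = {ξ | j ≤ N ∧ x j ≤ ξ ∧ ξ < x (j + 1)} ∪
      {ξ | j = N ∧ ¬∃ i, i ≤ N ∧ x i ≤ ξ ∧ ξ < x (i + 1)} := by
  ext ξ
  simp only [mem_preimage, mem_singleton_iff, mem_union, mem_ofPred_eq]
  by_cases h : ∃ i, i ≤ N ∧ x i ≤ ξ ∧ ξ < x (i + 1)
  · refine ⟨fun hj => Or.inl ⟨hj ▸ jstar_le N x ξ, hj ▸ jstar_mem_segment h⟩, ?_⟩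
    rintro (⟨hj, hξ⟩ | ⟨-, hn⟩)
    · exact eq_of_mem_segment_of_mem_segment hx (jstar_le N x ξ) hj (jstar_mem_segment h) hξ
    · exact absurd h hn
  · rw [jstar, dif_neg h]
    refine ⟨fun hj => Or.inr ⟨hj.symm, h⟩, ?_⟩
    rintro (⟨hj, hξ⟩ | ⟨hj, -⟩)
    · exact absurd ⟨j, hj, hξ⟩ h
    · exact hj.symm

lemma measurable_jstar (hx : MonotoneOn x (Iic (N + 1))) : Measurable (jstar N x) :=
  measurable_to_countable' fun j => by
    rw [jstar_preimage_singleton hx j]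
    measurability

lemma measurable_dualQ (hx : MonotoneOn x (Iic (N + 1))) :
    Measurable fun q : ℝ × ℝ => dualQ N x q.1 q.2 := by
  have hsegment : Measurable fun p : (ℝ × ℝ) × ℕ =>
      if x (p.2 + 1) = x p.2 then p.1.1
      else if p.1.2 < (x (p.2 + 1) - p.1.1) / (x (p.2 + 1) - x p.2) then x p.2
      else x (p.2 + 1) :=
    measurable_from_prod_countable_left fun j => by
      by_cases h : x (j + 1) = x j
      · simpa only [h, if_true] using measurable_fst
      · simp only [h, if_false]
        exact Measurable.ite (measurableSet_lt measurable_snd (by fun_prop))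
          measurable_const measurable_const
  exact hsegment.comp (measurable_id.prodMk ((measurable_jstar hx).comp measurable_fst))

lemma dualQ_mem_grid (hx : StrictMonoOn x (Iic (N + 1))) (ξ lam : ℝ) :
    ∃ j < N + 2, dualQ N x ξ lam = x j := by
  have hj := jstar_le N x ξ
  have hne : x (jstar N x ξ + 1) ≠ x (jstar N x ξ) :=
    (hx (mem_Iic.2 (by omega)) (mem_Iic.2 (by omega)) (Nat.lt_succ_self _)).ne'
  rw [dualQ, if_neg hne]
  split_ifs
  exacts [⟨_, by omega, rfl⟩, ⟨_, by omega, rfl⟩]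

end Grid

section Probability

variable {Ω : Type*} [MeasurableSpace Ω] {P : Measure Ω}

lemma measureReal_eq_sum_inter_fiber [IsFiniteMeasure P] {ι β : Type*} [MeasurableSpace β]
    [MeasurableSingletonClass β] {Y : Ω → β} {y : ι → β} {s : Finset ι} (hy : InjOn y s)
    (hYs : ∀ ω, ∃ j ∈ s, Y ω = y j) (hY : Measurable Y) {E : Set Ω} (hE : MeasurableSet E) :
    P.real E = ∑ j ∈ s, P.real ({ω | Y ω = y j} ∩ E) := by
  have hcover : E = ⋃ j ∈ s, {ω | Y ω = y j} ∩ E := by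
    ext ω
    simp only [mem_iUnion, mem_inter_iff, mem_ofPred_eq, exists_prop]
    obtain ⟨j, hj, hYj⟩ := hYs ω
    exact ⟨fun hω => ⟨j, hj, hYj, hω⟩, fun ⟨_, _, _, hω⟩ => hω⟩
  have hdisj : PairwiseDisjoint (s : Set ι) fun j => {ω | Y ω = y j} ∩ E :=
    fun i hi j hj hij =>
      Set.disjoint_left.2 fun _ hωi hωj => hij (hy hi hj (hωi.1.symm.trans hωj.1))
  conv_lhs => rw [hcover]
  exact measureReal_biUnion_finset hdisj fun j _ => (hY (measurableSet_singleton _)).inter hE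

lemma ProbabilityTheory.IndepFun.measureReal_inter_preimage_eq_mul {β γ : Type*}
    [MeasurableSpace β] [MeasurableSpace γ] {f : Ω → β} {g : Ω → γ} (h : IndepFun f g P)
    {s : Set β} {t : Set γ} (hs : MeasurableSet s) (ht : MeasurableSet t) :
    P.real (f ⁻¹' s ∩ g ⁻¹' t) = P.real (f ⁻¹' s) * P.real (g ⁻¹' t) := by
  simp only [measureReal_def, h.measure_inter_preimage_eq_mul s t hs ht, ENNReal.toReal_mul]

lemma measureReal_prodMk_preimage_of_bernoulli [IsProbabilityMeasure P] {γ : Type*}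
    [MeasurableSpace γ] {Z : Ω → ℝ} {Λ : Ω → γ} (hZΛ : IndepFun Z Λ P) (hZ : Measurable Z)
    (hΛ : Measurable Λ) (hZ01 : ∀ ω, Z ω = 0 ∨ Z ω = 1) {B : Set (ℝ × γ)} (hB : MeasurableSet B) :
    P.real ((fun ω => (Z ω, Λ ω)) ⁻¹' B) =
      (1 - P.real (Z ⁻¹' {1})) * P.real (Λ ⁻¹' (Prod.mk 0 ⁻¹' B)) +
        P.real (Z ⁻¹' {1}) * P.real (Λ ⁻¹' (Prod.mk 1 ⁻¹' B)) := by
  have hZ1 : MeasurableSet ({1} : Set ℝ) := measurableSet_singleton 1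
  have hsplit : (fun ω => (Z ω, Λ ω)) ⁻¹' B =
      Z ⁻¹' {1}ᶜ ∩ Λ ⁻¹' (Prod.mk 0 ⁻¹' B) ∪ Z ⁻¹' {1} ∩ Λ ⁻¹' (Prod.mk 1 ⁻¹' B) := by
    ext ω
    rcases hZ01 ω with h | h <;> simp [h]
  have hdisj : Disjoint (Z ⁻¹' {1}ᶜ ∩ Λ ⁻¹' (Prod.mk 0 ⁻¹' B))
      (Z ⁻¹' {1} ∩ Λ ⁻¹' (Prod.mk 1 ⁻¹' B)) :=
    Set.disjoint_left.2 fun _ h0 h1 => h0.1 h1.1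
  rw [hsplit, measureReal_union hdisj ((hZ hZ1).inter (hΛ (measurable_prodMk_left hB))),
    hZΛ.measureReal_inter_preimage_eq_mul hZ1.compl (measurable_prodMk_left hB),
    hZΛ.measureReal_inter_preimage_eq_mul hZ1 (measurable_prodMk_left hB), preimage_compl,
    probReal_compl_eq_one_sub (hZ hZ1)]

end Probability

section Scheme

variable {Ω : Type*} {Z Λ : ℕ → Ω → ℝ}

/-- `σ(Z i, Λ i : i ∈ S)`. -/
abbrev stepsSigma (Z Λ : ℕ → Ω → ℝ) (S : Set ℕ) : MeasurableSpace Ω :=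
  ⨆ i ∈ Sum.elim id id ⁻¹' S, MeasurableSpace.comap (Sum.elim Z Λ i) inferInstance

lemma measurable_stepsSigma_left {S : Set ℕ} {k : ℕ} (hk : k ∈ S) :
    Measurable[stepsSigma Z Λ S] (Z k) :=
  (comap_measurable (Z k)).mono
    (le_biSup (fun i => MeasurableSpace.comap (Sum.elim Z Λ i) inferInstance)
      (show Sum.inl k ∈ Sum.elim id id ⁻¹' S from hk)) le_rfl

lemma measurable_stepsSigma_right {S : Set ℕ} {k : ℕ} (hk : k ∈ S) :
    Measurable[stepsSigma Z Λ S] (Λ k) :=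
  (comap_measurable (Λ k)).mono
    (le_biSup (fun i => MeasurableSpace.comap (Sum.elim Z Λ i) inferInstance)
      (show Sum.inr k ∈ Sum.elim id id ⁻¹' S from hk)) le_rfl

lemma stepsSigma_mono {S T : Set ℕ} (hST : S ⊆ T) : stepsSigma Z Λ S ≤ stepsSigma Z Λ T :=
  biSup_mono fun _ hi => hST hi

variable {Nk : ℕ → ℕ} {x : ℕ → ℕ → ℝ} {α : ℕ → ℝ}

lemma measurable_XhatScheme_stepsSigma {k : ℕ}
    (hgrid : ∀ j < k, MonotoneOn (x j) (Iic (Nk j + 1))) :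
    Measurable[stepsSigma Z Λ (Iio k)] (XhatScheme Nk x α Z Λ k) := by
  induction k with
  | zero => exact measurable_const
  | succ k ih =>
    have hpast : Measurable[stepsSigma Z Λ (Iio (k + 1))] (XhatScheme Nk x α Z Λ k) :=
      (ih fun j hj => hgrid j (by omega)).mono
        (stepsSigma_mono (Iio_subset_Iio (Nat.le_succ k))) le_rfl
    have hk : k ∈ Iio (k + 1) := Nat.lt_succ_self k
    exact (measurable_dualQ (hgrid k hk)).comp
      ((hpast.add ((measurable_stepsSigma_left hk).const_mul _)).prodMk
        (measurable_stepsSigma_right hk))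

lemma XhatScheme_succ_mem_grid {k : ℕ} (hx : StrictMonoOn (x k) (Iic (Nk k + 1))) (ω : Ω) :
    ∃ j ∈ Finset.range (Nk k + 2), XhatScheme Nk x α Z Λ (k + 1) ω = x k j :=
  let ⟨j, hj, hXj⟩ := dualQ_mem_grid hx _ _
  ⟨j, Finset.mem_range.2 hj, hXj⟩

variable [MeasurableSpace Ω] {P : Measure Ω}

lemma stepsSigma_le (hZ : ∀ i, Measurable (Z i)) (hΛ : ∀ i, Measurable (Λ i)) (S : Set ℕ) :
    stepsSigma Z Λ S ≤ ‹MeasurableSpace Ω› :=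
  iSup₂_le fun i _ => (Sum.rec hZ hΛ i : Measurable (Sum.elim Z Λ i)).comap_le

lemma measurable_XhatScheme (hZ : ∀ i, Measurable (Z i)) (hΛ : ∀ i, Measurable (Λ i)) {k : ℕ}
    (hgrid : ∀ j < k, MonotoneOn (x j) (Iic (Nk j + 1))) :
    Measurable (XhatScheme Nk x α Z Λ k) :=
  (measurable_XhatScheme_stepsSigma hgrid).mono (stepsSigma_le hZ hΛ _) le_rfl

lemma indep_stepsSigma (hZ : ∀ i, Measurable (Z i)) (hΛ : ∀ i, Measurable (Λ i))
    (hindep : iIndepFun (m := fun _ : ℕ ⊕ ℕ => (inferInstance : MeasurableSpace ℝ))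
      (Sum.elim Z Λ) P) {S T : Set ℕ} (hST : Disjoint S T) :
    Indep (stepsSigma Z Λ S) (stepsSigma Z Λ T) P :=
  indep_iSup_of_disjoint (fun i => (Sum.rec hZ hΛ i : Measurable (Sum.elim Z Λ i)).comap_le)
    hindep.iIndep (hST.preimage _)

lemma indepFun_XhatScheme (hZ : ∀ i, Measurable (Z i)) (hΛ : ∀ i, Measurable (Λ i))
    (hindep : iIndepFun (m := fun _ : ℕ ⊕ ℕ => (inferInstance : MeasurableSpace ℝ))
      (Sum.elim Z Λ) P) {k : ℕ} (hgrid : ∀ j < k, MonotoneOn (x j) (Iic (Nk j + 1))) :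
    IndepFun (XhatScheme Nk x α Z Λ k) (fun ω => (Z k ω, Λ k ω)) P := by
  rw [IndepFun_iff_Indep]
  refine indep_of_indep_of_le_right (indep_of_indep_of_le_left
    (indep_stepsSigma (S := Iio k) (T := {k}) hZ hΛ hindep
      (disjoint_singleton_right.2 (lt_irrefl k)))
    (measurable_XhatScheme_stepsSigma hgrid).comap_le) ?_
  exact ((measurable_stepsSigma_left (mem_singleton k)).prodMk
    (measurable_stepsSigma_right (mem_singleton k))).comap_le

lemma measureReal_XhatScheme_inter_succ [IsProbabilityMeasure P]
    (hZ : ∀ i, Measurable (Z i)) (hΛ : ∀ i, Measurable (Λ i))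
    (hindep : iIndepFun (m := fun _ : ℕ ⊕ ℕ => (inferInstance : MeasurableSpace ℝ))
      (Sum.elim Z Λ) P) {k : ℕ} (hgrid : ∀ j ≤ k, MonotoneOn (x j) (Iic (Nk j + 1)))
    (hZ01 : ∀ ω, Z k ω = 0 ∨ Z k ω = 1) (c v : ℝ) :
    P.real ({ω | XhatScheme Nk x α Z Λ k ω = c} ∩ {ω | XhatScheme Nk x α Z Λ (k + 1) ω = v}) =
      ((1 - P.real (Z k ⁻¹' {1})) * P.real {ω | dualQ (Nk k) (x k) c (Λ k ω) = v} +
          P.real (Z k ⁻¹' {1}) * P.real {ω | dualQ (Nk k) (x k) (c + α k) (Λ k ω) = v}) *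
        P.real {ω | XhatScheme Nk x α Z Λ k ω = c} := by
  set B : Set (ℝ × ℝ) := {q | dualQ (Nk k) (x k) (c + α k * q.1) q.2 = v}
  have hB : MeasurableSet B :=
    (measurable_dualQ (hgrid k le_rfl)).comp (f := fun q : ℝ × ℝ => (c + α k * q.1, q.2))
      (by fun_prop) (measurableSet_singleton v)
  have hevent : {ω | XhatScheme Nk x α Z Λ k ω = c} ∩ {ω | XhatScheme Nk x α Z Λ (k + 1) ω = v} =
      XhatScheme Nk x α Z Λ k ⁻¹' {c} ∩ (fun ω => (Z k ω, Λ k ω)) ⁻¹' B := by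
    ext ω
    simp only [mem_inter_iff, mem_ofPred_eq, mem_preimage, mem_singleton_iff, XhatScheme, B]
    constructor <;> rintro ⟨rfl, h⟩ <;> exact ⟨rfl, h⟩
  have hindepX : IndepFun (XhatScheme Nk x α Z Λ k) (fun ω => (Z k ω, Λ k ω)) P :=
    indepFun_XhatScheme hZ hΛ hindep fun j hj => hgrid j hj.le
  have hZΛ : IndepFun (Z k) (Λ k) P := hindep.indepFun Sum.inl_ne_inr
  rw [hevent, hindepX.measureReal_inter_preimage_eq_mul (measurableSet_singleton c) hB,
    measureReal_prodMk_preimage_of_bernoulli hZΛ (hZ k) (hΛ k) hZ01 hB, mul_comm]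
  simp only [B, preimage_ofPred_eq, mul_zero, add_zero, mul_one]
  rfl

end Scheme

theorem dualQ_weights_recursion_general {Ω : Type*} [MeasurableSpace Ω] (P : Measure Ω)
    [IsProbabilityMeasure P]
    (n : ℕ) (hn : 1 ≤ n) (α p : ℕ → ℝ)
    (hp : ∀ i < n, p i ∈ Set.Ioo (0 : ℝ) 1)
    (Z Λ : ℕ → Ω → ℝ)
    (hZmeas : ∀ i, Measurable (Z i)) (hΛmeas : ∀ i, Measurable (Λ i))
    (hZ01 : ∀ i < n, ∀ ω, Z i ω = 0 ∨ Z i ω = 1)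
    (hZp : ∀ i < n, P {ω | Z i ω = 1} = ENNReal.ofReal (p i))
    (hindep : iIndepFun (m := fun _ : ℕ ⊕ ℕ => (inferInstance : MeasurableSpace ℝ))
      (Sum.elim Z Λ) P)
    -- the grids, with pairwise distinct points:
    -- `x k 0 = 0 < x k 1 < … < x k (Nk k) < x k (Nk k + 1) = Σ_{i ≤ k} αᵢ`
    (Nk : ℕ → ℕ) (x : ℕ → ℕ → ℝ)
    (hmono : ∀ k < n, ∀ j ≤ Nk k, x k j < x k (j + 1)) :
    -- initial step: `X̂¹ = J_{Γ₀}(0 + α₀ Z₀, Λ₀)` with `X̂⁰ = 0`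
    (∀ l ≤ Nk 0 + 1,
      (P {ω | XhatScheme Nk x α Z Λ 1 ω = x 0 l}).toReal =
        (1 - p 0) * (P {ω | dualQ (Nk 0) (x 0) 0 (Λ 0 ω) = x 0 l}).toReal +
          p 0 * (P {ω | dualQ (Nk 0) (x 0) (α 0) (Λ 0 ω) = x 0 l}).toReal) ∧
    -- general step
    (∀ k, 0 < k → k < n → ∀ l ≤ Nk k + 1,
      (P {ω | XhatScheme Nk x α Z Λ (k + 1) ω = x k l}).toReal =
        ∑ j ∈ Finset.range (Nk (k - 1) + 2),
          ((1 - p k) * (P {ω | dualQ (Nk k) (x k) (x (k - 1) j) (Λ k ω) = x k l}).toReal +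
            p k * (P {ω | dualQ (Nk k) (x k) (x (k - 1) j + α k) (Λ k ω) = x k l}).toReal) *
          (P {ω | XhatScheme Nk x α Z Λ k ω = x (k - 1) j}).toReal) := by
  have hgrid : ∀ k < n, StrictMonoOn (x k) (Iic (Nk k + 1)) := fun k hk =>
    strictMonoOn_Iic_of_lt_succ fun j hj => hmono k hk j (by omega)
  have hstep : ∀ k < n, ∀ c v : ℝ,
      P.real ({ω | XhatScheme Nk x α Z Λ k ω = c} ∩ {ω | XhatScheme Nk x α Z Λ (k + 1) ω = v}) =
        ((1 - p k) * P.real {ω | dualQ (Nk k) (x k) c (Λ k ω) = v} +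
            p k * P.real {ω | dualQ (Nk k) (x k) (c + α k) (Λ k ω) = v}) *
          P.real {ω | XhatScheme Nk x α Z Λ k ω = c} := fun k hk c v => by
    have hpk : P.real (Z k ⁻¹' {1}) = p k := by
      rw [measureReal_def, show Z k ⁻¹' {1} = {ω | Z k ω = 1} from rfl, hZp k hk,
        ENNReal.toReal_ofReal (hp k hk).1.le]
    rw [measureReal_XhatScheme_inter_succ hZmeas hΛmeas hindep
      (fun j hj => (hgrid j (by omega)).monotoneOn) (hZ01 k hk), hpk]
  refine ⟨fun l _ => ?_, fun k hk0 hkn l _ => ?_⟩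
  · simpa [XhatScheme, measureReal_def] using hstep 0 hn 0 (x 0 l)
  · obtain ⟨m, rfl⟩ : ∃ m, k = m + 1 := ⟨k - 1, by omega⟩
    have hinj : InjOn (x m) (Finset.range (Nk m + 2) : Set ℕ) :=
      (hgrid m (by omega)).injOn.mono fun j hj => by
        simp only [Finset.coe_range, mem_Iio, mem_Iic] at hj ⊢; omega
    simp only [Nat.add_sub_cancel, ← measureReal_def]
    rw [measureReal_eq_sum_inter_fiber (E := {ω | XhatScheme Nk x α Z Λ (m + 2) ω = x (m + 1) l})
      hinj (XhatScheme_succ_mem_grid (hgrid m (by omega)))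
      (measurable_XhatScheme hZmeas hΛmeas fun j hj => (hgrid j (by omega)).monotoneOn)
      (measurable_XhatScheme hZmeas hΛmeas (fun j hj => (hgrid j (by omega)).monotoneOn)
        (measurableSet_singleton _))]
    exact Finset.sum_congr rfl fun j _ => hstep (m + 1) hkn _ _

/-- **Forward recursion for the weights.** In the dual quantization scheme, for
every `k = 1,…,n` and every grid point `x_l^k` of `Γ_k ∪ {x_0^k, x_{N_k+1}^k}`:
`P(X̂ᵏ = x_l^k) = Σ_{j=0}^{N_{k−1}+1} [(1 − p_k) λ_l^k(x_j^{k−1}) + p_k λ_l^k(x_j^{k−1}+α_k)]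
  · P(X̂ᵏ⁻¹ = x_j^{k−1})`,
where `λ_l^k(ξ) := P(J_{Γ_k}(ξ, Λ_k) = x_l^k)`.  (The first conjunct treats the initial step
`k = 1`, for which `X̂⁰ = 0` is deterministic; the second conjunct treats steps `k ≥ 2`.) -/
theorem dualQ_weights_recursion {Ω : Type*} [MeasurableSpace Ω] (P : Measure Ω)
    [IsProbabilityMeasure P]
    (n : ℕ) (hn : 1 ≤ n) (α p : ℕ → ℝ)
    (hα : ∀ i < n, 0 < α i) (hp : ∀ i < n, p i ∈ Set.Ioo (0 : ℝ) 1)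
    (Z Λ : ℕ → Ω → ℝ)
    (hZmeas : ∀ i, Measurable (Z i)) (hΛmeas : ∀ i, Measurable (Λ i))
    (hZ01 : ∀ i < n, ∀ ω, Z i ω = 0 ∨ Z i ω = 1)
    (hZp : ∀ i < n, P {ω | Z i ω = 1} = ENNReal.ofReal (p i))
    (hΛunif : ∀ i < n, Measure.map (Λ i) P = volume.restrict (Set.Icc (0 : ℝ) 1))
    (hindep : iIndepFun (m := fun _ : ℕ ⊕ ℕ => (inferInstance : MeasurableSpace ℝ))
      (Sum.elim Z Λ) P)
    -- the grids, with pairwise distinct points: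
    -- `x k 0 = 0 < x k 1 < … < x k (Nk k) < x k (Nk k + 1) = Σ_{i ≤ k} αᵢ`
    (Nk : ℕ → ℕ) (x : ℕ → ℕ → ℝ)
    (hmono : ∀ k < n, ∀ j ≤ Nk k, x k j < x k (j + 1))
    (hx0 : ∀ k < n, x k 0 = 0)
    (hxN : ∀ k < n, x k (Nk k + 1) = ∑ i ∈ Finset.range (k + 1), α i) :
    -- initial step: `X̂¹ = J_{Γ₀}(0 + α₀ Z₀, Λ₀)` with `X̂⁰ = 0`
    (∀ l ≤ Nk 0 + 1,
      (P {ω | XhatScheme Nk x α Z Λ 1 ω = x 0 l}).toReal =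
        (1 - p 0) * (P {ω | dualQ (Nk 0) (x 0) 0 (Λ 0 ω) = x 0 l}).toReal +
          p 0 * (P {ω | dualQ (Nk 0) (x 0) (α 0) (Λ 0 ω) = x 0 l}).toReal) ∧
    -- general step
    (∀ k, 0 < k → k < n → ∀ l ≤ Nk k + 1,
      (P {ω | XhatScheme Nk x α Z Λ (k + 1) ω = x k l}).toReal =
        ∑ j ∈ Finset.range (Nk (k - 1) + 2),
          ((1 - p k) * (P {ω | dualQ (Nk k) (x k) (x (k - 1) j) (Λ k ω) = x k l}).toReal +
            p k * (P {ω | dualQ (Nk k) (x k) (x (k - 1) j + α k) (Λ k ω) = x k l}).toReal) *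
          (P {ω | XhatScheme Nk x α Z Λ k ω = x (k - 1) j}).toReal) :=
  dualQ_weights_recursion_general P n hn α p hp Z Λ hZmeas hΛmeas hZ01 hZp hindep Nk x hmono
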